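/- arXiv:1811.06402 — 2 statements merged into one kernel-verified Lean document; each statement's English description precedes it below -/
import Mathlib

section
/- SCC^cof implies SCC^split: if for every countable M ≺ (H_θ, ∈, Δ) and every β < ω₂ there is a countable M' with M ⊑ M' ≺ (H_θ, ∈, Δ) and sup(M' ∩ ω₂) ≥ β, then for every countable M ≺ (H_θ, ∈, Δ) there exist countable M₀, M₁ with M ⊑ Mᵢ ≺ (H_θ, ∈, Δ) for i ∈ {0,1} such that M₀ ∩ ω₂ and M₁ ∩ ω₂ are ⊆-incomparable. -/
open FirstOrder Set

noncomputable def ω1 : Ordinal := (Cardinal.aleph 1).ord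
noncomputable def ω2 : Ordinal := (Cardinal.aleph 2).ord

/-- The trace of `M ⊆ H` on the ordinals below `γ`, where `oe : Ordinal → H` is the
identification of (set-theoretic) ordinals with elements of `H = H_θ`. -/
def otr {H : Type*} (oe : Ordinal → H) (γ : Ordinal) (M : Set H) : Set Ordinal :=
  {α | α < γ ∧ oe α ∈ M}

/-- `M` is (the underlying set of) an elementary substructure, w.r.t. the structure `st`. -/
def IsElemSetOf (L : FirstOrder.Language) {H : Type*} (st : L.Structure H) (M : Set H) : Prop :=
  letI := st
  ∃ S : L.ElementarySubstructure H, (S : Set H) = M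

/-- The language with two binary relation symbols (for `∈` and a wellorder `Δ`). -/
def setLang : FirstOrder.Language where
  Functions := fun _ => Empty
  Relations := fun n => match n with | 2 => Bool | _ => Empty

/-- The structure `(H, ∈, Δ)` for `setLang`. -/
def setStruct {H : Type*} (mem Δ : H → H → Prop) : setLang.Structure H where
  funMap := fun f _ => f.elim
  RelMap := fun {n} =>
    match n with
    | 0 => fun r _ => r.elim
    | 1 => fun r _ => r.elim
    | 2 => fun b x => cond (show Bool from b) (mem (x 0) (x 1)) (Δ (x 0) (x 1))
    | _ + 3 => fun r _ => r.elim

/-- The language with one binary relation symbol (for `∈`). -/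
def memLang : FirstOrder.Language where
  Functions := fun _ => Empty
  Relations := fun n => match n with | 2 => Unit | _ => Empty

/-- The structure `(H, ∈)` for `memLang`. -/
def memStruct {H : Type*} (mem : H → H → Prop) : memLang.Structure H where
  funMap := fun f _ => f.elim
  RelMap := fun {n} =>
    match n with
    | 0 => fun r _ => r.elim
    | 1 => fun r _ => r.elim
    | 2 => fun _ x => mem (x 0) (x 1)
    | _ + 3 => fun r _ => r.elim

/-- `M ⊑ N` : `M ⊆ N` and `M ∩ ω₁ = N ∩ ω₁`. -/
def sqle {H : Type*} (oe : Ordinal → H) (M N : Set H) : Prop :=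
  M ⊆ N ∧ otr oe ω1 M = otr oe ω1 N

/-- `A` is an initial segment of `B` (as sets of ordinals). -/
def InitialSegOf (A B : Set Ordinal) : Prop :=
  A ⊆ B ∧ ∀ b ∈ B, ∀ a ∈ A, b < a → b ∈ A

/-- `X` is a Chang set: `|X ∩ ω₂| = ω₁` and `X ∩ ω₁` is a countable ordinal. -/
def Chang {H : Type*} (oe : Ordinal → H) (X : Set H) : Prop :=
  Cardinal.mk ↥(otr oe ω2 X) = Cardinal.aleph 1 ∧ ∃ δ, δ < ω1 ∧ otr oe ω1 X = Set.Iio δ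

/-! Choose for every `β < ω₂` a countable `⊑`-extension `F β` of `M` whose trace on `ω₂` has
supremum at least `β`. Iterating `β ↦ sup tr(F (β + 1))` along `ω₁` yields `δ < ω₂` of cofinality
`ω₁` below which cofinally many `β` satisfy `sup tr(F (β + 1)) < δ`. The countable set
`tr(F δ) ∩ δ` is bounded by such a `β`; then `F (β + 1)` has an ordinal in `(β, δ)` missing from
`F δ`, while `F δ` has an ordinal `≥ δ`, which `F (β + 1)` lacks. -/

open Cardinal Ordinal Order

universe u

namespace Ordinal

theorem bddAbove_of_countable {s : Set Ordinal} (hs : s.Countable) : BddAbove s :=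
  have := hs.to_subtype
  bddAbove_of_small

theorem sSup_lt_of_countable {s : Set Ordinal} {a : Ordinal} (ha : ℵ₀ < a.cof)
    (hs : s.Countable) (h : ∀ i ∈ s, i < a) : sSup s < a := by
  refine sSup_lt_of_lt_cof ?_ h
  rw [← lift_cof]
  exact hs.le_aleph0.trans_lt (by simpa only [lift_aleph0] using Cardinal.lift_lt.2 ha)

noncomputable def supIter (h : Ordinal.{u} → Ordinal.{u}) : Ordinal.{u} → Ordinal.{u} :=
  lt_wf.fix fun ν ih => ⨆ μ : Iio ν, h (ih μ μ.2)

theorem supIter_eq (h : Ordinal → Ordinal) (ν : Ordinal) :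
    supIter h ν = ⨆ μ : Iio ν, h (supIter h μ) :=
  lt_wf.fix_eq _ ν

theorem apply_supIter_le_supIter (h : Ordinal → Ordinal) {μ ν : Ordinal} (hμν : μ < ν) :
    h (supIter h μ) ≤ supIter h ν := by
  rw [supIter_eq h ν]
  exact Ordinal.le_iSup (fun μ : Iio ν ↦ h (supIter h μ)) ⟨μ, hμν⟩

theorem supIter_lt {o : Ordinal.{u}} {h : Ordinal → Ordinal} (hh : ∀ β < o, h β < o) {ν : Ordinal}
    (hν : ν.card < o.cof) : supIter h ν < o := by
  induction ν using WellFoundedLT.induction with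
  | _ ν ih =>
    rw [supIter_eq]
    refine lift_iSup_lt_of_lt_cof ?_ fun μ ↦ hh _ (ih μ μ.2 ((card_le_card μ.2.le).trans_lt hν))
    rw [Cardinal.mk_Iio_ordinal, ← lift_cof, Cardinal.lift_lift]
    exact Cardinal.lift_lt.{u, u + 1}.2 hν

theorem exists_cof_eq_aleph_one_cofinally_closed {o : Ordinal} (ho : ℵ₁ < o.cof)
    {h : Ordinal → Ordinal} (hh : ∀ β < o, β < h β ∧ h β < o) :
    ∃ δ < o, δ.cof = ℵ₁ ∧ ∀ σ < δ, ∃ β < δ, σ ≤ β ∧ h β < δ := by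
  set B := supIter h
  have hB : ∀ ν ≤ ω₁, B ν < o := fun ν hν ↦ supIter_lt (fun β hβ ↦ (hh β hβ).2) <| by
    simpa using (card_le_card hν).trans_lt (by simpa using ho)
  have hmono : StrictMono fun μ : Iio ω₁ ↦ h (B μ) := fun μ ν hμν ↦
    (apply_supIter_le_supIter h hμν).trans_lt (hh _ (hB ν ν.2.le)).1
  have hδ : B ω₁ = ⨆ μ : Iio ω₁, h (B μ) := supIter_eq h ω₁
  have hlt : ∀ μ < ω₁, h (B μ) < B ω₁ := fun μ hμ ↦ by
    have hμ1 : μ + 1 < ω₁ := (isSuccLimit_omega 1).add_one_lt hμ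
    rw [hδ, Ordinal.lt_iSup_iff]
    exact ⟨⟨μ + 1, hμ1⟩, hmono (show (⟨μ, hμ⟩ : Iio ω₁) < ⟨μ + 1, hμ1⟩ from lt_add_one μ)⟩
  refine ⟨B ω₁, hB _ le_rfl, ?_, fun σ hσ ↦ ?_⟩
  · rw [hδ, cof_iSup_Iio hmono (isSuccLimit_omega 1).isSuccPrelimit, cof_omega_one]
  · rw [hδ, Ordinal.lt_iSup_iff] at hσ
    obtain ⟨⟨μ, hμ⟩, hσμ⟩ := hσ
    have hμ1 : μ + 1 < ω₁ := (isSuccLimit_omega 1).add_one_lt hμ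
    exact ⟨B (μ + 1), (hh _ (hB _ hμ1.le)).1.trans (hlt _ hμ1),
      hσμ.le.trans (apply_supIter_le_supIter h (lt_add_one μ)), hlt _ hμ1⟩

theorem exists_not_subset_and_not_subset {o : Ordinal} (ho : ℵ₁ < o.cof)
    {T : Ordinal → Set Ordinal} (hTc : ∀ β < o, (T β).Countable) (hTo : ∀ β < o, T β ⊆ Iio o)
    (hT : ∀ β < o, β ≤ sSup (T β)) : ∃ β₀ < o, ∃ β₁ < o, ¬T β₀ ⊆ T β₁ ∧ ¬T β₁ ⊆ T β₀ := by
  have hlim : IsSuccLimit o := one_lt_cof_iff.1 ((one_lt_aleph0.trans aleph0_lt_aleph_one).trans ho)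
  have hh : ∀ β < o, β < sSup (T (β + 1)) ∧ sSup (T (β + 1)) < o := fun β hβ ↦
    have hβ1 := hlim.add_one_lt hβ
    ⟨(lt_add_one β).trans_le (hT _ hβ1),
      Ordinal.sSup_lt_of_countable (aleph0_lt_aleph_one.trans ho) (hTc _ hβ1) (hTo _ hβ1)⟩
  obtain ⟨δ, hδo, hδcof, hδ⟩ := exists_cof_eq_aleph_one_cofinally_closed ho hh
  have hSc : (T δ ∩ Iio δ).Countable := (hTc δ hδo).mono inter_subset_left
  have hS : sSup (T δ ∩ Iio δ) < δ :=
    Ordinal.sSup_lt_of_countable (hδcof ▸ aleph0_lt_aleph_one) hSc fun _ hi ↦ hi.2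
  obtain ⟨β, hβδ, hSβ, hβ⟩ := hδ _ hS
  have hβ1 : β + 1 < o := hlim.add_one_lt (hβδ.trans hδo)
  obtain ⟨g, hgT, hβg⟩ := exists_lt_of_lt_csSup' (hh β (hβδ.trans hδo)).1
  obtain ⟨γ, hγT, hδγ⟩ : ∃ γ ∈ T δ, δ ≤ γ := by
    by_contra! hlt
    exact (hT δ hδo).not_gt <|
      (csSup_le' fun γ hγ ↦ le_csSup (bddAbove_of_countable hSc) ⟨hγ, hlt γ hγ⟩).trans_lt hS
  have hTβ : ∀ x ∈ T (β + 1), x < δ := fun x hx ↦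
    (le_csSup (bddAbove_of_countable (hTc _ hβ1)) hx).trans_lt hβ
  refine ⟨β + 1, hβ1, δ, hδo, fun hsub ↦ ?_, fun hsub ↦ (hTβ γ (hsub hγT)).not_ge hδγ⟩
  exact hβg.not_ge ((le_csSup (bddAbove_of_countable hSc) ⟨hsub hgT, hTβ g hgT⟩).trans hSβ)

end Ordinal

theorem aleph_one_lt_cof_ω2 : ℵ₁ < ω2.cof := by
  rw [ω2, ← one_add_one_eq_two, (isRegular_aleph_add_one 1).cof_ord]
  exact aleph_lt_aleph.2 (lt_add_one 1)

theorem Set.Countable.otr {H : Type*} {oe : Ordinal → H} (hoe : Function.Injective oe)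
    (γ : Ordinal) {M : Set H} (hM : M.Countable) : (otr oe γ M).Countable :=
  (hM.preimage hoe).mono fun _ hα ↦ hα.2

theorem stmt_2_general {H : Type*} (mem Δ : H → H → Prop)
    (oe : Ordinal → H) (hoe : Function.Injective oe)
    (hcof : ∀ M : Set H, M.Countable → IsElemSetOf setLang (setStruct mem Δ) M →
      ∀ β, β < ω2 → ∃ M' : Set H, M'.Countable ∧ IsElemSetOf setLang (setStruct mem Δ) M' ∧
        sqle oe M M' ∧ β ≤ sSup (otr oe ω2 M')) :
    ∀ M : Set H, M.Countable → IsElemSetOf setLang (setStruct mem Δ) M →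
      ∃ M₀ M₁ : Set H, M₀.Countable ∧ M₁.Countable ∧
        IsElemSetOf setLang (setStruct mem Δ) M₀ ∧ IsElemSetOf setLang (setStruct mem Δ) M₁ ∧
        sqle oe M M₀ ∧ sqle oe M M₁ ∧
        ¬ otr oe ω2 M₀ ⊆ otr oe ω2 M₁ ∧ ¬ otr oe ω2 M₁ ⊆ otr oe ω2 M₀ := by
  intro M hMc hMe
  choose! F hFc hFe hFsq hFsup using hcof M hMc hMe
  obtain ⟨β₀, hβ₀, β₁, hβ₁, h₀₁, h₁₀⟩ :=
    Ordinal.exists_not_subset_and_not_subset aleph_one_lt_cof_ω2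
      (fun β hβ ↦ (hFc β hβ).otr hoe ω2) (fun _ _ _ hα ↦ hα.1) hFsup
  exact ⟨F β₀, F β₁, hFc _ hβ₀, hFc _ hβ₁, hFe _ hβ₀, hFe _ hβ₁, hFsq _ hβ₀, hFsq _ hβ₁,
    h₀₁, h₁₀⟩

/-- `SCC^cof` implies `SCC^split`. -/
theorem stmt_2 {H : Type*} (mem Δ : H → H → Prop) (hΔ : IsWellOrder H Δ)
    (oe : Ordinal → H) (hoe : Function.Injective oe)
    (hcof : ∀ M : Set H, M.Countable → IsElemSetOf setLang (setStruct mem Δ) M →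
      ∀ β, β < ω2 → ∃ M' : Set H, M'.Countable ∧ IsElemSetOf setLang (setStruct mem Δ) M' ∧
        sqle oe M M' ∧ β ≤ sSup (otr oe ω2 M')) :
    ∀ M : Set H, M.Countable → IsElemSetOf setLang (setStruct mem Δ) M →
      ∃ M₀ M₁ : Set H, M₀.Countable ∧ M₁.Countable ∧
        IsElemSetOf setLang (setStruct mem Δ) M₀ ∧ IsElemSetOf setLang (setStruct mem Δ) M₁ ∧
        sqle oe M M₀ ∧ sqle oe M M₁ ∧
        ¬ otr oe ω2 M₀ ⊆ otr oe ω2 M₁ ∧ ¬ otr oe ω2 M₁ ⊆ otr oe ω2 M₀ :=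
  stmt_2_general mem Δ oe hoe hcof
end

section
/- Suppose SCC holds and M is a countable elementary substructure of (H_θ, ∈, Δ) such that M has no pair of countable elementary ⊑-extensions whose intersections with ω₂ are ⊆-incomparable. Then any two Chang elementary ⊑-extensions X, Y of M (elementary in (H_θ, ∈, Δ)) satisfy X ∩ ω₂ = Y ∩ ω₂. -/
open FirstOrder Set

/-!
If `β ∈ X ∩ ω₂` is missing from `Y`, take a countable elementary `N ⊆ X` containing `M ∪ {β}`.
It is a `⊑`-extension of `M` because it lies between `M` and `X`. Since `Y ∩ ω₂` is uncountable
while `N ∩ ω₂` is countable, some `η ∈ Y ∩ ω₂` is missing from `N`, and a countable elementary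
`N' ⊆ Y` containing `M ∪ {η}` is a second `⊑`-extension of `M`. Then `β` separates `N` from `N'`
and `η` separates `N'` from `N`: their traces on `ω₂` are `⊆`-incomparable.
-/

open FirstOrder.Language

theorem FirstOrder.Language.ElementaryEmbedding.isElementary_range {L : Language} {M N : Type*}
    [L.Structure M] [L.Structure N] (f : M ↪ₑ[L] N) : f.toEmbedding.toHom.range.IsElementary := by
  intro n φ x
  set e := f.toEmbedding.equivRange
  obtain ⟨y, rfl⟩ : ∃ y, x = e ∘ y := ⟨e.symm ∘ x, funext fun i => (e.apply_symm_apply (x i)).symm⟩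
  calc φ.Realize (f ∘ y) ↔ φ.Realize y := f.map_formula φ y
    _ ↔ φ.Realize (e ∘ y) := (StrongHomClass.realize_formula e φ).symm

theorem IsElemSetOf.exists_countable_between {L : Language} [Countable L.Symbols] {H : Type*}
    {st : L.Structure H} {X S : Set H} (hX : IsElemSetOf L st X) (hS : S.Countable)
    (hSX : S ⊆ X) : ∃ N : Set H, N.Countable ∧ IsElemSetOf L st N ∧ S ⊆ N ∧ N ⊆ X := by
  by_cases hXc : X.Countable
  · exact ⟨X, hXc, hX, hSX, subset_rfl⟩
  let _ := st
  obtain ⟨E, rfl⟩ := hX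
  have : Infinite E := Set.infinite_coe_iff.2 fun h => hXc h.countable
  obtain ⟨T, hST, hT⟩ :=
    exists_elementarySubstructure_card_eq L ((↑) ⁻¹' S : Set E) Cardinal.aleph0.{0} le_rfl
    (by simpa using (hS.preimage Subtype.val_injective).le_aleph0)
    (by rw [Cardinal.lift_aleph0, Cardinal.lift_le_aleph0]; exact Cardinal.mk_le_aleph0)
    (by simp)
  let f : T ↪ₑ[L] H := E.subtype.comp T.subtype
  refine ⟨range f, ?_, ⟨⟨_, f.isElementary_range⟩, rfl⟩, fun x hx => ?_, ?_⟩
  · have : Countable T := Cardinal.mk_le_aleph0_iff.1 (by simpa using hT.le)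
    exact countable_range f
  · exact ⟨⟨⟨x, hSX hx⟩, hST hx⟩, rfl⟩
  · rintro _ ⟨y, rfl⟩
    exact (y : E).2

instance : Countable setLang.Symbols := by
  have : ∀ n, Countable (setLang.Relations n)
    | 2 => inferInstanceAs (Countable Bool)
    | 0 | 1 | _ + 3 => inferInstanceAs (Countable Empty)
  have : ∀ n, Countable (setLang.Functions n) := fun _ => inferInstanceAs (Countable Empty)
  unfold Language.Symbols
  infer_instance

section Traces

variable {H : Type*} {oe : Ordinal → H}

theorem otr_mono {γ : Ordinal} {M N : Set H} (h : M ⊆ N) : otr oe γ M ⊆ otr oe γ N :=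
  fun _ hα => ⟨hα.1, h hα.2⟩

theorem otr_countable (hoe : Function.Injective oe) {γ : Ordinal} {N : Set H} (hN : N.Countable) :
    (otr oe γ N).Countable :=
  (hN.preimage hoe).mono fun _ hα => hα.2

theorem sqle.of_subset_of_subset {M N X : Set H} (hMX : sqle oe M X) (hMN : M ⊆ N)
    (hNX : N ⊆ X) : sqle oe M N :=
  ⟨hMN, (otr_mono hMN).antisymm ((otr_mono hNX).trans hMX.2.symm.subset)⟩

theorem Chang.not_countable_otr {X : Set H} (hX : Chang oe X) : ¬ (otr oe ω2 X).Countable := by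
  rw [← Cardinal.le_aleph0_iff_set_countable, hX.1]
  exact Cardinal.aleph0_lt_aleph_one.not_ge

end Traces

theorem exists_incomparable_of_mem_otr_diff {L : Language} [Countable L.Symbols] {H : Type*}
    {st : L.Structure H} {oe : Ordinal → H} (hoe : Function.Injective oe) {M X Y : Set H}
    (hMc : M.Countable) (hXe : IsElemSetOf L st X) (hXsq : sqle oe M X)
    (hYe : IsElemSetOf L st Y) (hYsq : sqle oe M Y) (hY : ¬ (otr oe ω2 Y).Countable)
    {β : Ordinal} (hβX : β ∈ otr oe ω2 X) (hβY : β ∉ otr oe ω2 Y) :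
    ∃ M₀ M₁ : Set H, M₀.Countable ∧ M₁.Countable ∧
      IsElemSetOf L st M₀ ∧ IsElemSetOf L st M₁ ∧ sqle oe M M₀ ∧ sqle oe M M₁ ∧
      ¬ otr oe ω2 M₀ ⊆ otr oe ω2 M₁ ∧ ¬ otr oe ω2 M₁ ⊆ otr oe ω2 M₀ := by
  obtain ⟨N, hNc, hNe, hMβN, hNX⟩ :=
    hXe.exists_countable_between (hMc.insert (oe β)) (insert_subset hβX.2 hXsq.1)
  obtain ⟨η, hηY, hηN⟩ := not_subset.1 fun h => hY ((otr_countable hoe hNc).mono h)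
  obtain ⟨N', hN'c, hN'e, hMηN', hN'Y⟩ :=
    hYe.exists_countable_between (hMc.insert (oe η)) (insert_subset hηY.2 hYsq.1)
  refine ⟨N, N', hNc, hN'c, hNe, hN'e,
    hXsq.of_subset_of_subset ((subset_insert _ _).trans hMβN) hNX,
    hYsq.of_subset_of_subset ((subset_insert _ _).trans hMηN') hN'Y, fun h => ?_, fun h => ?_⟩
  · exact hβY (otr_mono hN'Y (h ⟨hβX.1, hMβN (mem_insert _ _)⟩))
  · exact hηN (h ⟨hηY.1, hMηN' (mem_insert _ _)⟩)

theorem stmt_8_general {H : Type*} (mem Δ : H → H → Prop)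
    (oe : Ordinal → H) (hoe : Function.Injective oe)
    (M : Set H) (hMc : M.Countable)
    (hno : ¬ ∃ M₀ M₁ : Set H, M₀.Countable ∧ M₁.Countable ∧
        IsElemSetOf setLang (setStruct mem Δ) M₀ ∧ IsElemSetOf setLang (setStruct mem Δ) M₁ ∧
        sqle oe M M₀ ∧ sqle oe M M₁ ∧
        ¬ otr oe ω2 M₀ ⊆ otr oe ω2 M₁ ∧ ¬ otr oe ω2 M₁ ⊆ otr oe ω2 M₀)
    (X Y : Set H)
    (hXe : IsElemSetOf setLang (setStruct mem Δ) X) (hXsq : sqle oe M X) (hXch : Chang oe X)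
    (hYe : IsElemSetOf setLang (setStruct mem Δ) Y) (hYsq : sqle oe M Y) (hYch : Chang oe Y) :
    otr oe ω2 X = otr oe ω2 Y := by
  refine Subset.antisymm (fun β hβX => ?_) (fun β hβY => ?_) <;> by_contra hβ <;> apply hno
  · exact exists_incomparable_of_mem_otr_diff hoe hMc hXe hXsq hYe hYsq hYch.not_countable_otr
      hβX hβ
  · exact exists_incomparable_of_mem_otr_diff hoe hMc hYe hYsq hXe hXsq hXch.not_countable_otr
      hβY hβ

/-- if SCC holds and the countable elementary `M` has no pair of countable
elementary `⊑`-extensions with `⊆`-incomparable intersections with `ω₂`, then any two Chang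
elementary `⊑`-extensions `X, Y` of `M` satisfy `X ∩ ω₂ = Y ∩ ω₂`. -/
theorem stmt_8 {H : Type*} (mem Δ : H → H → Prop) (hΔ : IsWellOrder H Δ)
    (oe : Ordinal → H) (hoe : Function.Injective oe)
    (hSCC : ∀ M₀ : Set H, M₀.Countable → IsElemSetOf setLang (setStruct mem Δ) M₀ →
      ∃ M' : Set H, M'.Countable ∧ IsElemSetOf setLang (setStruct mem Δ) M' ∧
        sqle oe M₀ M' ∧ otr oe ω2 M₀ ⊂ otr oe ω2 M')
    (M : Set H) (hMc : M.Countable) (hMe : IsElemSetOf setLang (setStruct mem Δ) M)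
    (hno : ¬ ∃ M₀ M₁ : Set H, M₀.Countable ∧ M₁.Countable ∧
        IsElemSetOf setLang (setStruct mem Δ) M₀ ∧ IsElemSetOf setLang (setStruct mem Δ) M₁ ∧
        sqle oe M M₀ ∧ sqle oe M M₁ ∧
        ¬ otr oe ω2 M₀ ⊆ otr oe ω2 M₁ ∧ ¬ otr oe ω2 M₁ ⊆ otr oe ω2 M₀)
    (X Y : Set H)
    (hXe : IsElemSetOf setLang (setStruct mem Δ) X) (hXsq : sqle oe M X) (hXch : Chang oe X)
    (hYe : IsElemSetOf setLang (setStruct mem Δ) Y) (hYsq : sqle oe M Y) (hYch : Chang oe Y) :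
    otr oe ω2 X = otr oe ω2 Y :=
  stmt_8_general mem Δ oe hoe M hMc hno X Y hXe hXsq hXch hYe hYsq hYch
end
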